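/- In the down-up algebra D(0,1), let R denote the k-span of the images of all words w in the free monoid on {u,d} with φ(w) = e (equivalently, R = k[(du)², (ud)², d⁴, u²]). Then the k-span of the images of all words w with φ(w) = ρ equals u·R = {u·a : a ∈ R}, and the k-span of the images of all words w with φ(w) = ρ² equals u²·R; in particular, these components are free right R-modules of rank 1 generated by u and u² respectively. -/

import Mathlib

open FreeAlgebra

noncomputable section

/-- The defining relations of the down-up algebra `D(a,b)` (with `u = ι k 0`, `d = ι k 1`). -/
inductive DownUpRel (k : Type*) [CommRing k] (a b : k) :
    FreeAlgebra k (Fin 2) → FreeAlgebra k (Fin 2) → Prop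
  | rel1 : DownUpRel k a b (ι k 0 * ι k 0 * ι k 1)
      (a • (ι k 0 * ι k 1 * ι k 0) + b • (ι k 1 * ι k 0 * ι k 0))
  | rel2 : DownUpRel k a b (ι k 0 * ι k 1 * ι k 1)
      (a • (ι k 1 * ι k 0 * ι k 1) + b • (ι k 1 * ι k 1 * ι k 0))

/-- The down-up algebra `D(a,b)`. -/
abbrev DownUp (k : Type*) [CommRing k] (a b : k) : Type _ :=
  RingQuot (DownUpRel k a b)

/-- The generator `u` of the down-up algebra. -/
def DownUp.u (k : Type*) [CommRing k] (a b : k) : DownUp k a b :=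
  RingQuot.mkAlgHom k (DownUpRel k a b) (ι k 0)

/-- The generator `d` of the down-up algebra. -/
def DownUp.d (k : Type*) [CommRing k] (a b : k) : DownUp k a b :=
  RingQuot.mkAlgHom k (DownUpRel k a b) (ι k 1)

/-- The image in `D(a,b)` of a word in the free monoid on the generators `u, d`. -/
def DownUp.wordVal (k : Type*) [CommRing k] (a b : k) :
    FreeMonoid (Fin 2) →* DownUp k a b :=
  FreeMonoid.lift fun i => RingQuot.mkAlgHom k (DownUpRel k a b) (ι k i)

/-- The degree-`n` component of the down-up algebra: the `k`-span of the images of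
all words of length `n` in `u` and `d`. -/
def DownUp.degComp (k : Type*) [CommRing k] (a b : k) (n : ℕ) :
    Submodule k (DownUp k a b) :=
  Submodule.span k {z | ∃ w : FreeMonoid (Fin 2), w.length = n ∧ DownUp.wordVal k a b w = z}

/-- The monoid homomorphism `φ` from the free monoid on `{u, d}` to the dihedral group
`D₈` of order 8 sending `u ↦ ρ` (the rotation of order 4) and `d ↦ r` (a reflection). -/
def phiD8 : FreeMonoid (Fin 2) →* DihedralGroup 4 :=
  FreeMonoid.lift fun i =>
    if i = 0 then DihedralGroup.r 1 else DihedralGroup.sr 0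

/-- The `g`-component of the `D₈`-grading of `D(0,1)`: the `k`-span of the images of
all words `w` in `u, d` with `φ(w) = g`. -/
def D8comp (k : Type*) [CommRing k] (g : DihedralGroup 4) :
    Submodule k (DownUp k 0 1) :=
  Submodule.span k
    {z | ∃ w : FreeMonoid (Fin 2), phiD8 w = g ∧ DownUp.wordVal k 0 1 w = z}


/-!
In `D(0,1)` the squares `u²` and `d²` are central, so every word equals `u^(2a) d^(2b) w` with
`w` alternating. Mapping `u ↦ (e₀, s)` and `d ↦ (e₁, t)` into `ℤ² × D∞`, where `s, t` are the
generating reflections, separates these normal forms. Hence `D(0,1)` acts faithfully on the group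
algebra `k[ℤ² × D∞]`, on which `u` acts invertibly, so `u` is left regular. A normal form of
`φ`-degree `ρ` or `ρ²` cannot be `d^(2b) w` with `w` empty or starting with `d`, so it is `u`
times a word, of degree `1` or `ρ` respectively.
-/

namespace DownUp

open FreeMonoid DihedralGroup

variable (k : Type*) [CommRing k]

local notation "U" => u k 0 1
local notation "D" => d k 0 1
local notation "W" => wordVal k 0 1

lemma wordVal_of_zero : W (of 0) = U := lift_eval_of _ _

lemma wordVal_of_one : W (of 1) = D := lift_eval_of _ _

lemma commute_u_sq_d : Commute (U ^ 2) D := by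
  have h := RingQuot.mkAlgHom_rel k (DownUpRel.rel1 (k := k) (a := 0) (b := 1))
  simp only [map_mul, zero_smul, one_smul, zero_add] at h
  rw [Commute, SemiconjBy, sq, ← mul_assoc D]
  exact h

lemma commute_d_sq_u : Commute (D ^ 2) U := by
  have h := RingQuot.mkAlgHom_rel k (DownUpRel.rel2 (k := k) (a := 0) (b := 1))
  simp only [map_mul, zero_smul, one_smul, zero_add] at h
  rw [Commute, SemiconjBy, sq, ← mul_assoc U]
  exact h.symm

lemma range_mkAlgHom_ι :
    Set.range (fun i => RingQuot.mkAlgHom k (DownUpRel k 0 1) (ι k i)) = {U, D} := by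
  ext x
  simp [Fin.exists_fin_two, u, d, eq_comm]

lemma adjoin_u_d : Algebra.adjoin k {U, D} = ⊤ := by
  rw [← range_mkAlgHom_ι, Set.range_comp' (RingQuot.mkAlgHom k _) (ι k), Algebra.adjoin_image,
    FreeAlgebra.adjoin_range_ι, Algebra.map_top, AlgHom.range_eq_top]
  exact RingQuot.mkAlgHom_surjective k _

lemma span_range_wordVal : Submodule.span k (Set.range W) = ⊤ := by
  rw [← MonoidHom.coe_mrange, wordVal, FreeMonoid.mrange_lift, range_mkAlgHom_ι,
    ← Algebra.adjoin_eq_span, adjoin_u_d, Algebra.top_toSubmodule]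

lemma commute_of_commute_u_d {x : DownUp k 0 1} (hu : Commute x U) (hd : Commute x D)
    (y : DownUp k 0 1) : Commute x y :=
  Algebra.commute_of_mem_adjoin_of_forall_mem_commute (adjoin_u_d k ▸ Algebra.mem_top)
    (by simpa using ⟨hu, hd⟩)

lemma commute_u_sq (y : DownUp k 0 1) : Commute (U ^ 2) y :=
  commute_of_commute_u_d k ((Commute.refl U).pow_left 2) (commute_u_sq_d k) y

lemma commute_d_sq (y : DownUp k 0 1) : Commute (D ^ 2) y :=
  commute_of_commute_u_d k (commute_d_sq_u k) ((Commute.refl D).pow_left 2) y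

def toMonoidAlgebra {G : Type*} [Monoid G] (f : FreeMonoid (Fin 2) →* G)
    (h₀ : Commute (f (of 0) ^ 2) (f (of 1))) (h₁ : Commute (f (of 1) ^ 2) (f (of 0))) :
    DownUp k 0 1 →ₐ[k] MonoidAlgebra k G :=
  RingQuot.liftAlgHom k ⟨FreeAlgebra.lift k fun i => MonoidAlgebra.of k G (f (of i)), by
    rintro _ _ ⟨⟩
    · simpa [sq, mul_assoc] using congrArg (MonoidAlgebra.of k G) h₀.eq
    · simpa [sq, mul_assoc] using congrArg (MonoidAlgebra.of k G) h₁.eq.symm⟩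

lemma toMonoidAlgebra_wordVal {G : Type*} [Monoid G] {f : FreeMonoid (Fin 2) →* G}
    {h₀ : Commute (f (of 0) ^ 2) (f (of 1))} {h₁ : Commute (f (of 1) ^ 2) (f (of 0))}
    (w : FreeMonoid (Fin 2)) : toMonoidAlgebra k f h₀ h₁ (W w) = MonoidAlgebra.of k G (f w) := by
  have : (toMonoidAlgebra k f h₀ h₁ : DownUp k 0 1 →* MonoidAlgebra k G).comp W =
      (MonoidAlgebra.of k G).comp f :=
    FreeMonoid.hom_eq fun i => by simp [toMonoidAlgebra, wordVal]
  exact DFunLike.congr_fun this w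

lemma apply_eq_of_wordVal_eq [Nontrivial k] {G : Type*} [Monoid G] (f : FreeMonoid (Fin 2) →* G)
    (h₀ : Commute (f (of 0) ^ 2) (f (of 1))) (h₁ : Commute (f (of 1) ^ 2) (f (of 0)))
    {w w' : FreeMonoid (Fin 2)} (h : W w = W w') : f w = f w' := by
  apply MonoidAlgebra.of_injective (R := k)
  rw [← toMonoidAlgebra_wordVal k (h₀ := h₀) (h₁ := h₁), h, toMonoidAlgebra_wordVal]

def altWord : Fin 2 → ℕ → FreeMonoid (Fin 2)
  | _, 0 => 1
  | i, n + 1 => of i * altWord i.rev n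

lemma of_mul_altWord (j i : Fin 2) (n : ℕ) :
    of j * altWord i n = altWord j (n + 1) ∨ ∃ m, altWord i n = of j * altWord j.rev m := by
  cases n with
  | zero => exact Or.inl rfl
  | succ m =>
    by_cases hij : i = j
    · exact Or.inr ⟨m, by rw [hij, altWord]⟩
    · left
      have : i = j.rev := by fin_cases i <;> fin_cases j <;> simp_all
      rw [this]
      rfl

def normalWord (a b : ℕ) (i : Fin 2) (n : ℕ) : FreeMonoid (Fin 2) :=
  of 0 ^ (2 * a) * of 1 ^ (2 * b) * altWord i n

lemma wordVal_normalWord (a b : ℕ) (i : Fin 2) (n : ℕ) :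
    W (normalWord a b i n) = (U ^ 2) ^ a * (D ^ 2) ^ b * W (altWord i n) := by
  simp [normalWord, pow_mul, wordVal_of_zero, wordVal_of_one]

theorem exists_wordVal_eq_normalWord (w : FreeMonoid (Fin 2)) :
    ∃ a b i n, W w = W (normalWord a b i n) := by
  induction w using FreeMonoid.inductionOn' with
  | one => exact ⟨0, 0, 0, 0, by simp [normalWord, altWord]⟩
  | of_mul j w ih =>
    obtain ⟨a, b, i, n, h⟩ := ih
    have hc : ∀ y, Commute ((U ^ 2) ^ a * (D ^ 2) ^ b) y := fun y =>
      ((commute_u_sq k y).pow_left a).mul_left ((commute_d_sq k y).pow_left b)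
    have hw : W (of j * w) = (U ^ 2) ^ a * (D ^ 2) ^ b * W (of j * altWord i n) := by
      rw [map_mul, h, wordVal_normalWord, ← mul_assoc, ← (hc _).eq, mul_assoc, map_mul]
    rcases of_mul_altWord j i n with h' | ⟨m, h'⟩
    · exact ⟨a, b, j, n + 1, by rw [hw, h', wordVal_normalWord]⟩
    · rw [hw, h', ← mul_assoc, map_mul, map_mul, ← sq]
      obtain rfl | rfl : j = 0 ∨ j = 1 := by omega
      · refine ⟨a + 1, b, Fin.rev 0, m, ?_⟩
        rw [wordVal_normalWord, wordVal_of_zero, pow_succ (U ^ 2)]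
        simp only [mul_assoc]
        rw [(commute_u_sq k _).left_comm]
      · refine ⟨a, b + 1, Fin.rev 1, m, ?_⟩
        rw [wordVal_normalWord, wordVal_of_one, pow_succ (D ^ 2)]
        simp only [mul_assoc]

def multidegree : FreeMonoid (Fin 2) →* Multiplicative (Fin 2 → ℤ) :=
  FreeMonoid.lift fun i => Multiplicative.ofAdd (Pi.single i 1)

def toInfDihedral : FreeMonoid (Fin 2) →* DihedralGroup 0 :=
  FreeMonoid.lift fun i => sr (i : ℕ)

lemma toInfDihedral_of_zero : toInfDihedral (of 0) = sr 0 := by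
  simp [toInfDihedral]

lemma toInfDihedral_of_one : toInfDihedral (of 1) = sr 1 := by
  simp [toInfDihedral]

lemma toInfDihedral_altWord_even (m : ℕ) :
    toInfDihedral (altWord 0 (2 * m)) = r (m : ZMod 0) ∧
      toInfDihedral (altWord 1 (2 * m)) = r (-(m : ZMod 0)) := by
  induction m with
  | zero => exact ⟨rfl, rfl⟩
  | succ m ih =>
    rw [show 2 * (m + 1) = 2 * m + 1 + 1 by ring]
    simp only [altWord, Fin.isValue, Fin.reduceRev, map_mul, toInfDihedral_of_zero,
      toInfDihedral_of_one, ih, ← mul_assoc, sr_mul_sr, r_mul_r]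
    constructor <;> congr 1 <;> push_cast <;> ring

lemma toInfDihedral_altWord_odd (m : ℕ) :
    toInfDihedral (altWord 0 (2 * m + 1)) = sr (-(m : ZMod 0)) ∧
      toInfDihedral (altWord 1 (2 * m + 1)) = sr (1 + (m : ZMod 0)) := by
  simp only [altWord, Fin.isValue, Fin.reduceRev, map_mul, toInfDihedral_of_zero,
    toInfDihedral_of_one, toInfDihedral_altWord_even, sr_mul_r, zero_add, and_self]

lemma altWord_eq_of_toInfDihedral_eq {i j : Fin 2} {n m : ℕ}
    (h : toInfDihedral (altWord i n) = toInfDihedral (altWord j m)) :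
    altWord i n = altWord j m := by
  obtain ⟨n, rfl | rfl⟩ := Nat.even_or_odd' n <;> obtain ⟨m, rfl | rfl⟩ := Nat.even_or_odd' m <;>
    obtain rfl | rfl : i = 0 ∨ i = 1 := (by omega) <;>
    obtain rfl | rfl : j = 0 ∨ j = 1 := (by omega) <;>
    simp only [toInfDihedral_altWord_even, toInfDihedral_altWord_odd, r.injEq, sr.injEq,
      reduceCtorEq, neg_inj, add_right_inj, Nat.cast_inj] at h
  -- `ZMod 0` is `ℤ`, so `h` can be read as an equation of integers
  all_goals first
    | (subst h; rfl)
    | (obtain ⟨rfl, rfl⟩ : n = 0 ∧ m = 0 := by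
        first | (have : (n : ℤ) = -m := h; omega) | (have : -(n : ℤ) = m := h; omega)
       rfl)
    | (exfalso
       first | (have : -(n : ℤ) = 1 + m := h; omega) | (have : 1 + (n : ℤ) = -m := h; omega))

def toDegreeInfDihedral : FreeMonoid (Fin 2) →* Multiplicative (Fin 2 → ℤ) × DihedralGroup 0 :=
  multidegree.prod toInfDihedral

lemma commute_toDegreeInfDihedral_sq (i j : Fin 2) :
    Commute (toDegreeInfDihedral (of i) ^ 2) (toDegreeInfDihedral (of j)) := by
  simp [Commute, SemiconjBy, toDegreeInfDihedral, toInfDihedral, sq, mul_comm]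

lemma toInfDihedral_normalWord (a b : ℕ) (i : Fin 2) (n : ℕ) :
    toInfDihedral (normalWord a b i n) = toInfDihedral (altWord i n) := by
  simp [normalWord, pow_mul, sq, toInfDihedral]

lemma normalWord_eq_of_toDegreeInfDihedral_eq {a b a' b' n n' : ℕ} {i i' : Fin 2}
    (h : toDegreeInfDihedral (normalWord a b i n) = toDegreeInfDihedral (normalWord a' b' i' n')) :
    normalWord a b i n = normalWord a' b' i' n' := by
  have halt : altWord i n = altWord i' n' := by
    apply altWord_eq_of_toInfDihedral_eq
    simpa [toDegreeInfDihedral, toInfDihedral_normalWord] using congrArg Prod.snd h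
  have hdeg : multidegree (normalWord a b i n) = multidegree (normalWord a' b' i' n') :=
    congrArg Prod.fst h
  simp only [normalWord, halt, map_mul, mul_left_inj] at hdeg
  have ha : a = a' := by
    simpa [multidegree] using congrArg (fun x : Multiplicative (Fin 2 → ℤ) => x.toAdd 0) hdeg
  have hb : b = b' := by
    simpa [multidegree] using congrArg (fun x : Multiplicative (Fin 2 → ℤ) => x.toAdd 1) hdeg
  rw [normalWord, normalWord, halt, ha, hb]

section Faithful

variable [Nontrivial k]

lemma wordVal_eq_of_toDegreeInfDihedral_eq {w w' : FreeMonoid (Fin 2)}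
    (h : toDegreeInfDihedral w = toDegreeInfDihedral w') : W w = W w' := by
  have hf : ∀ {v v'}, W v = W v' → toDegreeInfDihedral v = toDegreeInfDihedral v' :=
    apply_eq_of_wordVal_eq k _ (commute_toDegreeInfDihedral_sq 0 1)
      (commute_toDegreeInfDihedral_sq 1 0)
  obtain ⟨a, b, i, n, hw⟩ := exists_wordVal_eq_normalWord k w
  obtain ⟨a', b', i', n', hw'⟩ := exists_wordVal_eq_normalWord k w'
  rw [hw, hw', normalWord_eq_of_toDegreeInfDihedral_eq]
  rw [← hf hw, ← hf hw', h]

abbrev infDihedralRep :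
    DownUp k 0 1 →ₐ[k] MonoidAlgebra k (Multiplicative (Fin 2 → ℤ) × DihedralGroup 0) :=
  toMonoidAlgebra k toDegreeInfDihedral (commute_toDegreeInfDihedral_sq 0 1)
    (commute_toDegreeInfDihedral_sq 1 0)

theorem infDihedralRep_injective : Function.Injective (infDihedralRep k) := by
  classical
  let retraction := (MonoidAlgebra.basis _ k).constr k fun g =>
    if h : ∃ w, toDegreeInfDihedral w = g then W h.choose else 0
  have hret : retraction.comp (infDihedralRep k).toLinearMap = LinearMap.id := by
    refine LinearMap.ext_on_range (span_range_wordVal k) fun w => ?_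
    have hw : ∃ w', toDegreeInfDihedral w' = toDegreeInfDihedral w := ⟨w, rfl⟩
    rw [LinearMap.comp_apply, AlgHom.toLinearMap_apply, toMonoidAlgebra_wordVal,
      MonoidAlgebra.of_apply, ← MonoidAlgebra.basis_apply, Module.Basis.constr_basis, dif_pos hw]
    exact wordVal_eq_of_toDegreeInfDihedral_eq k hw.choose_spec
  exact Function.LeftInverse.injective (g := retraction) fun x => LinearMap.congr_fun hret x

theorem isLeftRegular_u : IsLeftRegular U := by
  intro x y hxy
  apply infDihedralRep_injective k
  have hu : infDihedralRep k U = MonoidAlgebra.of k _ (toDegreeInfDihedral (of 0)) := by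
    rw [← wordVal_of_zero, toMonoidAlgebra_wordVal]
  have := congrArg (infDihedralRep k) hxy
  simp only [map_mul, hu] at this
  exact ((Group.isUnit _).map
    (MonoidAlgebra.of k (Multiplicative (Fin 2 → ℤ) × DihedralGroup 0))).isRegular.left this

end Faithful

lemma phiD8_of_zero : phiD8 (of 0) = r 1 := by simp [phiD8]

lemma phiD8_of_one : phiD8 (of 1) = sr 0 := by simp [phiD8]

lemma commute_phiD8_sq (i j : Fin 2) : Commute (phiD8 (of i) ^ 2) (phiD8 (of j)) := by
  obtain rfl | rfl : i = 0 ∨ i = 1 := (by omega) <;>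
  obtain rfl | rfl : j = 0 ∨ j = 1 := (by omega) <;>
  simp only [phiD8_of_zero, phiD8_of_one, Commute, SemiconjBy] <;> decide

lemma phiD8_altWord_mem (n : ℕ) :
    phiD8 (altWord 0 n) ∈ ({1, r 1, sr 3, sr 0} : Finset (DihedralGroup 4)) ∧
      phiD8 (altWord 1 n) ∈ ({1, sr 0, sr 1, r 3} : Finset (DihedralGroup 4)) := by
  induction n with
  | zero => decide
  | succ n ih =>
    simp only [altWord, Fin.isValue, Fin.reduceRev, map_mul, phiD8_of_zero, phiD8_of_one]
    generalize phiD8 (altWord 0 n) = x, phiD8 (altWord 1 n) = y at ih ⊢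
    revert x y
    decide

section Grading

variable [Nontrivial k]

/-- `{1, sr 0, sr 1, r 3}` is the set of images under `φ` of the alternating words starting
with `d`. -/
theorem exists_wordVal_eq_u_mul (w : FreeMonoid (Fin 2))
    (hw : phiD8 w ∉ ({1, sr 0, sr 1, r 3} : Finset (DihedralGroup 4))) :
    ∃ w', phiD8 w = r 1 * phiD8 w' ∧ W w = U * W w' := by
  obtain ⟨a, b, i, n, h⟩ := exists_wordVal_eq_normalWord k w
  have hφ : phiD8 w = phiD8 (normalWord a b i n) :=
    apply_eq_of_wordVal_eq k _ (commute_phiD8_sq 0 1) (commute_phiD8_sq 1 0) h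
  have hd : phiD8 (of 1 ^ (2 * b)) = 1 := by simp [pow_mul, sq, phiD8_of_one]
  rw [hφ] at hw ⊢
  rw [h]
  rcases a with _ | a
  · obtain rfl | rfl : i = 0 ∨ i = 1 := by omega
    · cases n with
      | zero => simp [normalWord, altWord, hd] at hw
      | succ n =>
        have hc : Commute (W (of 1 ^ (2 * b))) U := by
          rw [map_pow, wordVal_of_one, pow_mul]
          exact (commute_d_sq k U).pow_left b
        have hnf : normalWord 0 b 0 (n + 1) = of 1 ^ (2 * b) * (of 0 * altWord 1 n) := by
          rw [normalWord, mul_zero, pow_zero, one_mul]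
          rfl
        refine ⟨of 1 ^ (2 * b) * altWord 1 n, ?_, ?_⟩
        · rw [hnf, map_mul, map_mul, map_mul, hd, one_mul, one_mul, phiD8_of_zero]
        · rw [hnf, map_mul, map_mul, map_mul, wordVal_of_zero, hc.left_comm]
    · exact absurd (by simpa [normalWord, hd] using (phiD8_altWord_mem n).2) hw
  · have hnf : normalWord (a + 1) b i n =
        of 0 * (of 0 ^ (2 * a + 1) * of 1 ^ (2 * b) * altWord i n) := by
      rw [normalWord, show 2 * (a + 1) = 2 * a + 1 + 1 by ring, pow_succ', mul_assoc, mul_assoc,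
        mul_assoc]
    refine ⟨of 0 ^ (2 * a + 1) * of 1 ^ (2 * b) * altWord i n, ?_, ?_⟩
    · rw [hnf, map_mul, phiD8_of_zero]
    · rw [hnf, map_mul, wordVal_of_zero]

theorem exists_wordVal_eq_u_mul_of_phiD8_eq_rho (w : FreeMonoid (Fin 2)) (hw : phiD8 w = r 1) :
    ∃ w', phiD8 w' = 1 ∧ W w = U * W w' := by
  obtain ⟨w', hφ, hW⟩ := exists_wordVal_eq_u_mul k w (by rw [hw]; decide)
  exact ⟨w', mul_left_cancel (hφ.symm.trans (hw.trans (mul_one _).symm)), hW⟩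

theorem exists_wordVal_eq_u_sq_mul_of_phiD8_eq_rho_sq (w : FreeMonoid (Fin 2))
    (hw : phiD8 w = r 2) : ∃ w', phiD8 w' = 1 ∧ W w = U ^ 2 * W w' := by
  obtain ⟨w', hφ, hW⟩ := exists_wordVal_eq_u_mul k w (by rw [hw]; decide)
  obtain ⟨w'', hφ', hW'⟩ := exists_wordVal_eq_u_mul_of_phiD8_eq_rho k w'
    (mul_left_cancel (hφ.symm.trans (hw.trans (by decide : r 2 = r 1 * r 1))))
  exact ⟨w'', hφ', by rw [hW, hW', ← mul_assoc, sq]⟩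

end Grading

end DownUp

theorem D8comp_phiD8_eq_map_mulLeft (k : Type*) [CommRing k] (p : FreeMonoid (Fin 2))
    (hp : ∀ w, phiD8 w = phiD8 p → ∃ w', phiD8 w' = 1 ∧
      DownUp.wordVal k 0 1 w = DownUp.wordVal k 0 1 p * DownUp.wordVal k 0 1 w') :
    D8comp k (phiD8 p) = (D8comp k 1).map (LinearMap.mulLeft k (DownUp.wordVal k 0 1 p)) := by
  apply le_antisymm
  · refine Submodule.span_le.mpr ?_
    rintro _ ⟨w, hw, rfl⟩
    obtain ⟨w', hw', h⟩ := hp w hw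
    exact ⟨_, Submodule.subset_span ⟨w', hw', rfl⟩, h.symm⟩
  · rw [D8comp, Submodule.map_span]
    refine Submodule.span_mono ?_
    rintro _ ⟨_, ⟨w, hw, rfl⟩, rfl⟩
    exact ⟨p * w, by rw [map_mul, hw, mul_one], by rw [map_mul]; rfl⟩

theorem D8comp_rho_rhoSq_general (k : Type*) [Field k] :
    D8comp k (DihedralGroup.r 1) =
      Submodule.map (LinearMap.mulLeft k (DownUp.u k 0 1)) (D8comp k 1) ∧
    D8comp k (DihedralGroup.r 2) =
      Submodule.map (LinearMap.mulLeft k (DownUp.u k 0 1 ^ 2)) (D8comp k 1) ∧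
    (∀ a ∈ D8comp k 1, DownUp.u k 0 1 * a = 0 → a = 0) ∧
    (∀ a ∈ D8comp k 1, DownUp.u k 0 1 ^ 2 * a = 0 → a = 0) := by
  have hu := DownUp.isLeftRegular_u k
  have hρ : phiD8 (FreeMonoid.of 0) = DihedralGroup.r 1 := DownUp.phiD8_of_zero
  have hρ2 : phiD8 (FreeMonoid.of 0 ^ 2) = DihedralGroup.r 2 := by rw [map_pow, hρ]; decide
  refine ⟨?_, ?_, fun a _ ha => hu (ha.trans (mul_zero _).symm),
    fun a _ ha => hu.pow 2 (ha.trans (mul_zero _).symm)⟩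
  · rw [← hρ, ← DownUp.wordVal_of_zero]
    exact D8comp_phiD8_eq_map_mulLeft k _ fun w hw =>
      DownUp.exists_wordVal_eq_u_mul_of_phiD8_eq_rho k w (hw.trans hρ)
  · rw [← hρ2, ← DownUp.wordVal_of_zero, ← map_pow]
    exact D8comp_phiD8_eq_map_mulLeft k _ fun w hw => by
      rw [map_pow, DownUp.wordVal_of_zero]
      exact DownUp.exists_wordVal_eq_u_sq_mul_of_phiD8_eq_rho_sq k w (hw.trans hρ2)

/-- with `R = D8comp k 1` (the identity component, i.e.
`k[(du)², (ud)², d⁴, u²]`), the `ρ`-component of `D(0,1)` is `u·R` and the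
`ρ²`-component is `u²·R`; moreover these are free right `R`-modules of rank 1
generated by `u` and `u²` respectively (left multiplication by `u`, resp. `u²`,
is injective on `R`). -/
theorem D8comp_rho_rhoSq (k : Type*) [Field k] [IsAlgClosed k] [CharZero k] :
    D8comp k (DihedralGroup.r 1) =
      Submodule.map (LinearMap.mulLeft k (DownUp.u k 0 1)) (D8comp k 1) ∧
    D8comp k (DihedralGroup.r 2) =
      Submodule.map (LinearMap.mulLeft k (DownUp.u k 0 1 ^ 2)) (D8comp k 1) ∧
    (∀ a ∈ D8comp k 1, DownUp.u k 0 1 * a = 0 → a = 0) ∧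
    (∀ a ∈ D8comp k 1, DownUp.u k 0 1 ^ 2 * a = 0 → a = 0) :=
  D8comp_rho_rhoSq_general k

end
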